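/- Let R be a base matrix with D-component Δ, s ∈ F((z^{-1}))^m, A = ⌊R^{-1}s⌋, α = {R^{-1}s}, ε ∈ F[z]^m, and a = A - ε. Then the following are equivalent: (1) Iv(Δα) ≤ Iv(Δε); (2) α = ε = 0 or Iv(Δα) < Iv(Δε); (3) Iv(-R·a + s) = Iv(Δα); (4) Iv(-R·a + s) > v(Δ). -/

import Mathlib

open Polynomial HahnSeries

noncomputable section

variable {F : Type*} [Field F] {m : ℕ}

/-- `z = X⁻¹` viewed in `F((z⁻¹)) = F((X))`. -/
def zed (F : Type*) [Field F] : LaurentSeries F := HahnSeries.single (-1 : ℤ) 1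

/-- Embedding of `F[z]` into `F((z⁻¹))`. -/
def Zpoly (p : Polynomial F) : LaurentSeries F := Polynomial.aeval (zed F) p

/-- Componentwise polynomial part `⌊·⌋` (terms with nonnegative powers of `z`). -/
def polyPart (f : LaurentSeries F) : LaurentSeries F where
  coeff n := if n ≤ 0 then f.coeff n else 0
  isPWO_support' := f.isPWO_support'.mono (fun n hn => by
    simp only [Function.mem_support, ne_eq] at hn ⊢
    by_cases h : n ≤ 0
    · simpa [h] using hn
    · simp [h] at hn)

/-- Fractional part `{·}` (strictly negative powers of `z`). -/
def fracPart (f : LaurentSeries F) : LaurentSeries F := f - polyPart f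

/-- Valuation with values in `WithTop ℤ`. -/
def vW (f : LaurentSeries F) : WithTop ℤ := open Classical in if f = 0 then ⊤ else (f.order : WithTop ℤ)

/-- Valuation of a vector: the minimum of component valuations. -/
def vV (r : Fin m → LaurentSeries F) : WithTop ℤ := Finset.univ.inf fun i => vW (r i)

/-- Indexed valuation of one component paired with its index. -/
def ivc (f : LaurentSeries F) (i : Fin m) : WithTop (Lex (ℤ × Fin m)) :=
  open Classical in if f = 0 then ⊤ else ↑(toLex (f.order, i))

/-- The indexed valuation `Iv` on `F((z⁻¹))^m`, with `Iv 0 = ⊤`. -/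
def Iv (r : Fin m → LaurentSeries F) : WithTop (Lex (ℤ × Fin m)) :=
  Finset.univ.inf fun i => ivc (r i) i


/-- `R` is a base matrix with column valuations `c`: each column `j` is nonzero,
has index `j`, and valuation `c j` (so its `D`-component is `Diag(z^{-c_1},…,z^{-c_m})`). -/
def IsBaseMatrix (R : Matrix (Fin m) (Fin m) (LaurentSeries F)) (c : Fin m → ℤ) : Prop :=
  ∀ j : Fin m, Iv (fun i => R i j) = ↑(toLex (c j, j))

/-- Multiplication by the `D`-matrix `Δ = Diag(z^{-c_1},…,z^{-c_m})`
(note `z^{-c} = X^c` in `F((X)) = F((z⁻¹))`). -/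
def Dmul (c : Fin m → ℤ) (r : Fin m → LaurentSeries F) : Fin m → LaurentSeries F :=
  fun j => HahnSeries.single (c j) 1 * r j

/-- `x > v(Δ)`: writing `x = (h,w)` one has `w > c h`; by convention `⊤ > v(Δ)`. -/
def gtVal (x : WithTop (Lex (ℤ × Fin m))) (c : Fin m → ℤ) : Prop :=
  ∀ (w : ℤ) (h : Fin m), x = ↑(toLex (w, h)) → c h < w

/-- `x ≤ v(Δ)`: writing `x = (h,w)` one has `w ≤ c h`. -/
def leVal (x : WithTop (Lex (ℤ × Fin m))) (c : Fin m → ℤ) : Prop :=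
  ∃ (w : ℤ) (h : Fin m), x = ↑(toLex (w, h)) ∧ w ≤ c h

/-!
Since `R⁻¹s = A + α` and `a = A - ε`, one has `-R·a + s = R(α + ε)`. The columns of a base matrix
have pairwise distinct indices, so no cancellation occurs in `R·x` and `Iv(R·x) = Iv(Δx)`; hence
`Iv(-R·a + s) = Iv(Δα + Δε)`. Now `α` has only negative powers of `z` and `ε` only nonnegative
ones, so `Iv(Δα) > v(Δ)` while `Iv(Δε) ≤ v(Δ)` unless `ε = 0`. In particular `Iv(Δα)` and `Iv(Δε)`
coincide only when both are `⊤`, the ultrametric inequality is an equality,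
`Iv(-R·a + s) = min(Iv(Δα), Iv(Δε))`, and each of the four conditions says that this minimum is
`Iv(Δα)`.
-/

lemma ivc_eq_map_orderTop (f : LaurentSeries F) (i : Fin m) :
    ivc f i = f.orderTop.map fun n => toLex (n, i) := by
  by_cases hf : f = 0
  · simp [ivc, hf]
  · simp [ivc, hf, ← HahnSeries.order_eq_orderTop_of_ne_zero hf]

lemma ivc_zero (i : Fin m) : ivc (0 : LaurentSeries F) i = ⊤ := by
  simp [ivc]

lemma ivc_of_ne_zero {f : LaurentSeries F} (hf : f ≠ 0) (i : Fin m) :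
    ivc f i = ↑(toLex (f.order, i)) := by
  simp [ivc, hf]

lemma ivc_eq_top_iff {f : LaurentSeries F} {i : Fin m} : ivc f i = ⊤ ↔ f = 0 := by
  by_cases hf : f = 0 <;> simp [ivc, hf]

lemma eq_zero_of_ivc_eq_ivc {f g : LaurentSeries F} {i j : Fin m} (hij : i ≠ j)
    (h : ivc f i = ivc g j) : f = 0 := by
  by_contra hf
  by_cases hg : g = 0
  · simp [ivc_of_ne_zero hf, hg, ivc_zero] at h
  · simp [ivc_of_ne_zero hf, ivc_of_ne_zero hg, hij] at h

lemma ivc_neg (f : LaurentSeries F) (i : Fin m) : ivc (-f) i = ivc f i := by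
  simp only [ivc_eq_map_orderTop, HahnSeries.orderTop_neg]

lemma min_ivc_le_ivc_add (f g : LaurentSeries F) (i : Fin m) :
    min (ivc f i) (ivc g i) ≤ ivc (f + g) i := by
  have hmono : Monotone fun n : ℤ => (toLex (n, i) : Lex (ℤ × Fin m)) := fun a b hab => by
    simp [Prod.Lex.toLex_le_toLex', hab]
  simp only [ivc_eq_map_orderTop, ← hmono.withTop_map.map_min]
  exact hmono.withTop_map HahnSeries.min_orderTop_le_orderTop_add

lemma Iv_le_ivc (r : Fin m → LaurentSeries F) (i : Fin m) : Iv r ≤ ivc (r i) i :=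
  Finset.inf_le (Finset.mem_univ i)

lemma Iv_eq_top_iff {r : Fin m → LaurentSeries F} : Iv r = ⊤ ↔ r = 0 := by
  simp [Iv, ivc_eq_top_iff, funext_iff]

lemma exists_Iv_eq {r : Fin m → LaurentSeries F} (hr : Iv r ≠ ⊤) :
    ∃ i, r i ≠ 0 ∧ Iv r = ↑(toLex ((r i).order, i)) := by
  have hne : (Finset.univ : Finset (Fin m)).Nonempty :=
    Finset.univ_nonempty_iff.mpr ⟨(Function.ne_iff.mp (mt Iv_eq_top_iff.mpr hr)).choose⟩
  obtain ⟨i, -, hi⟩ := Finset.exists_mem_eq_inf _ hne fun i => ivc (r i) i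
  have hri : r i ≠ 0 := fun h0 => hr (by rw [Iv, hi, h0, ivc_zero])
  exact ⟨i, hri, hi.trans (ivc_of_ne_zero hri i)⟩

lemma order_eq_of_Iv_eq_coe {r : Fin m → LaurentSeries F} {w : ℤ} {h : Fin m}
    (hr : Iv r = ↑(toLex (w, h))) : r h ≠ 0 ∧ (r h).order = w := by
  obtain ⟨i, hri, hi⟩ := exists_Iv_eq (hr ▸ WithTop.coe_ne_top)
  obtain ⟨rfl, rfl⟩ : (r i).order = w ∧ i = h := by simpa [hr] using hi.symm
  exact ⟨hri, rfl⟩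

lemma Iv_neg (r : Fin m → LaurentSeries F) : Iv (-r) = Iv r := by
  simp only [Iv, Pi.neg_apply, ivc_neg]

lemma min_Iv_le_Iv_add (u v : Fin m → LaurentSeries F) : min (Iv u) (Iv v) ≤ Iv (u + v) :=
  Finset.le_inf fun i _ =>
    (min_le_min (Iv_le_ivc u i) (Iv_le_ivc v i)).trans (min_ivc_le_ivc_add (u i) (v i) i)

lemma Iv_add_of_lt {u v : Fin m → LaurentSeries F} (h : Iv u < Iv v) : Iv (u + v) = Iv u := by
  -- apply the ultrametric inequality to `u = (u + v) + (-v)`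
  have hle : min (Iv (u + v)) (Iv v) ≤ Iv u := by
    simpa [Iv_neg] using min_Iv_le_Iv_add (u + v) (-v)
  refine le_antisymm ?_ (by simpa [h.le] using min_Iv_le_Iv_add u v)
  exact (min_le_iff.mp hle).resolve_right h.not_ge

lemma Iv_add {u v : Fin m → LaurentSeries F} (h : Iv u = Iv v → Iv u = ⊤) :
    Iv (u + v) = min (Iv u) (Iv v) := by
  rcases lt_trichotomy (Iv u) (Iv v) with huv | huv | huv
  · rw [Iv_add_of_lt huv, min_eq_left huv.le]
  · obtain rfl := Iv_eq_top_iff.mp (h huv)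
    obtain rfl := Iv_eq_top_iff.mp (huv ▸ h huv)
    simp
  · rw [add_comm, Iv_add_of_lt huv, min_eq_right huv.le]

lemma Iv_sum {ι : Type*} [DecidableEq ι] (s : Finset ι) (t : ι → Fin m → LaurentSeries F)
    (ht : ∀ j ∈ s, ∀ k ∈ s, j ≠ k → Iv (t j) = Iv (t k) → Iv (t j) = ⊤) :
    Iv (∑ j ∈ s, t j) = s.inf fun j => Iv (t j) := by
  induction s using Finset.induction_on with
  | empty => simp [Iv_eq_top_iff]
  | insert a s ha ih =>
    have ih := ih fun j hj k hk => ht j (by simp [hj]) k (by simp [hk])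
    have hdist : Iv (t a) = s.inf (fun j => Iv (t j)) → Iv (t a) = ⊤ := by
      intro heq
      rcases s.eq_empty_or_nonempty with rfl | hs
      · simpa using heq
      obtain ⟨k, hk, hk'⟩ := Finset.exists_mem_eq_inf _ hs fun j => Iv (t j)
      exact ht a (by simp) k (by simp [hk]) (by rintro rfl; exact ha hk) (heq.trans hk')
    rw [Finset.sum_insert ha, Finset.inf_insert, Iv_add (ih ▸ hdist), ih]

lemma Iv_mul_right {r : Fin m → LaurentSeries F} {w : ℤ} {h : Fin m}
    (hr : Iv r = ↑(toLex (w, h))) {x : LaurentSeries F} (hx : x ≠ 0) :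
    Iv (fun i => r i * x) = ↑(toLex (w + x.order, h)) := by
  obtain ⟨hrh, rfl⟩ := order_eq_of_Iv_eq_coe hr
  refine le_antisymm ?_ (Finset.le_inf fun i _ => ?_)
  · refine (Iv_le_ivc _ h).trans_eq ?_
    rw [ivc_of_ne_zero (mul_ne_zero hrh hx), HahnSeries.order_mul hrh hx]
  · by_cases hri : r i = 0
    · simp [hri, ivc_zero]
    have hle := hr ▸ Iv_le_ivc r i
    rw [ivc_of_ne_zero hri, WithTop.coe_le_coe, Prod.Lex.toLex_le_toLex'] at hle
    rw [ivc_of_ne_zero (mul_ne_zero hri hx), HahnSeries.order_mul hri hx, WithTop.coe_le_coe,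
      Prod.Lex.toLex_le_toLex']
    exact ⟨by simpa using hle.1, fun he => hle.2 (by simpa using he)⟩

lemma coeff_Zpoly (p : F[X]) (n : ℕ) : (Zpoly p).coeff (-n) = p.coeff n := by
  have hterm (i : ℕ) :
      (algebraMap F (LaurentSeries F) (p.coeff i) * zed F ^ i).coeff (-n) =
        if n = i then p.coeff i else 0 := by
    rw [LaurentSeries.algebraMap_apply, HahnSeries.C_mul_eq_smul]
    simp [zed, HahnSeries.single_pow, HahnSeries.coeff_single]
  rw [Zpoly, aeval_def, eval₂_eq_sum_range, HahnSeries.coeff_sum]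
  simp only [hterm]
  rw [Finset.sum_ite_eq]
  split_ifs with hn
  · rfl
  · exact (coeff_eq_zero_of_natDegree_lt (by simpa [Nat.lt_succ_iff] using hn)).symm

lemma coeff_Zpoly_neg_natDegree_ne_zero {p : F[X]} (hp : p ≠ 0) :
    (Zpoly p).coeff (-p.natDegree) ≠ 0 := by
  rw [coeff_Zpoly]
  exact leadingCoeff_ne_zero.mpr hp

lemma Zpoly_eq_zero_iff {p : F[X]} : Zpoly p = 0 ↔ p = 0 := by
  refine ⟨fun h => by_contra fun hp => coeff_Zpoly_neg_natDegree_ne_zero hp ?_,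
    fun h => by simp [h, Zpoly]⟩
  rw [h, HahnSeries.coeff_zero]

lemma order_Zpoly_nonpos {p : F[X]} (hp : p ≠ 0) : (Zpoly p).order ≤ 0 :=
  (HahnSeries.order_le_of_coeff_ne_zero (coeff_Zpoly_neg_natDegree_ne_zero hp)).trans (by omega)

lemma coeff_fracPart_of_nonpos (f : LaurentSeries F) {n : ℤ} (hn : n ≤ 0) :
    (fracPart f).coeff n = 0 := by
  simp [fracPart, polyPart, hn]

lemma order_fracPart_pos {f : LaurentSeries F} (hf : fracPart f ≠ 0) : 0 < (fracPart f).order := by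
  by_contra! hle
  exact hf (HahnSeries.coeff_order_eq_zero.mp (coeff_fracPart_of_nonpos f hle))

lemma Dmul_apply_eq_zero_iff {c : Fin m → ℤ} {r : Fin m → LaurentSeries F} {j : Fin m} :
    Dmul c r j = 0 ↔ r j = 0 := by
  simp [Dmul]

lemma Dmul_eq_zero_iff {c : Fin m → ℤ} {r : Fin m → LaurentSeries F} : Dmul c r = 0 ↔ r = 0 := by
  simp only [funext_iff, Pi.zero_apply, Dmul_apply_eq_zero_iff]

lemma order_Dmul {c : Fin m → ℤ} {r : Fin m → LaurentSeries F} {j : Fin m} (h : r j ≠ 0) :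
    (Dmul c r j).order = c j + (r j).order := by
  rw [Dmul, HahnSeries.order_mul (HahnSeries.single_ne_zero one_ne_zero) h,
    HahnSeries.order_single one_ne_zero]

lemma Dmul_add (c : Fin m → ℤ) (u v : Fin m → LaurentSeries F) :
    Dmul c (u + v) = Dmul c u + Dmul c v := by
  funext j
  simp [Dmul, mul_add]

lemma gtVal_Iv_Dmul {c : Fin m → ℤ} {r : Fin m → LaurentSeries F}
    (hr : ∀ i, r i ≠ 0 → 0 < (r i).order) : gtVal (Iv (Dmul c r)) c := by
  intro w h hw
  obtain ⟨hne, rfl⟩ := order_eq_of_Iv_eq_coe hw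
  have hrh : r h ≠ 0 := mt Dmul_apply_eq_zero_iff.mpr hne
  have := hr h hrh
  rw [order_Dmul hrh]
  omega

lemma leVal_Iv_Dmul {c : Fin m → ℤ} {r : Fin m → LaurentSeries F}
    (hr : ∀ i, r i ≠ 0 → (r i).order ≤ 0) (htop : Iv (Dmul c r) ≠ ⊤) :
    leVal (Iv (Dmul c r)) c := by
  obtain ⟨i, hne, hi⟩ := exists_Iv_eq htop
  have hri : r i ≠ 0 := mt Dmul_apply_eq_zero_iff.mpr hne
  have := hr i hri
  exact ⟨_, i, hi, by rw [order_Dmul hri]; omega⟩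

lemma gtVal.not_leVal {x : WithTop (Lex (ℤ × Fin m))} {c : Fin m → ℤ} (hx : gtVal x c) :
    ¬ leVal x c := by
  rintro ⟨w, h, rfl, hw⟩
  exact (hx w h rfl).not_ge hw

lemma eq_top_of_gtVal_of_leVal {x y : WithTop (Lex (ℤ × Fin m))} {c : Fin m → ℤ}
    (hx : gtVal x c) (hy : y ≠ ⊤ → leVal y c) (hxy : x = y) : x = ⊤ := by
  by_contra hne
  subst hxy
  exact hx.not_leVal (hy hne)

lemma gtVal_min_iff {x y : WithTop (Lex (ℤ × Fin m))} {c : Fin m → ℤ}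
    (hx : gtVal x c) (hy : y ≠ ⊤ → leVal y c) : gtVal (min x y) c ↔ x ≤ y := by
  refine ⟨fun h => ?_, fun h => by rwa [min_eq_left h]⟩
  by_contra! hlt
  rw [min_eq_right hlt.le] at h
  exact h.not_leVal (hy hlt.ne_top)

namespace IsBaseMatrix

variable {R : Matrix (Fin m) (Fin m) (LaurentSeries F)} {c : Fin m → ℤ}

lemma Iv_col_mul (hR : IsBaseMatrix R c) (j : Fin m) (y : LaurentSeries F) :
    Iv (fun i => R i j * y) = ivc (HahnSeries.single (c j) 1 * y) j := by
  by_cases hy : y = 0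
  · simp only [hy, mul_zero, ivc_zero]
    exact Iv_eq_top_iff.mpr rfl
  have hsingle : HahnSeries.single (c j) (1 : F) ≠ 0 := HahnSeries.single_ne_zero one_ne_zero
  rw [Iv_mul_right (hR j) hy, ivc_of_ne_zero (mul_ne_zero hsingle hy),
    HahnSeries.order_mul hsingle hy, HahnSeries.order_single one_ne_zero]

lemma Iv_mulVec (hR : IsBaseMatrix R c) (x : Fin m → LaurentSeries F) :
    Iv (R.mulVec x) = Iv (Dmul c x) := by
  have hsum : R.mulVec x = ∑ j, fun i => R i j * x j := by
    ext i
    simp [Matrix.mulVec, dotProduct]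
  rw [hsum, Iv_sum]
  · exact Finset.inf_congr rfl fun j _ => hR.Iv_col_mul j (x j)
  intro j _ k _ hjk heq
  rw [hR.Iv_col_mul, hR.Iv_col_mul] at heq
  rw [hR.Iv_col_mul]
  exact ivc_eq_top_iff.mpr (eq_zero_of_ivc_eq_ivc hjk heq)

lemma mulVec_injective (hR : IsBaseMatrix R c) : Function.Injective R.mulVec := by
  intro u v huv
  rw [← sub_eq_zero, ← Dmul_eq_zero_iff (c := c), ← Iv_eq_top_iff, ← hR.Iv_mulVec,
    Matrix.mulVec_sub, huv, sub_self, Iv_eq_top_iff]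

lemma mulVec_inv_mulVec (hR : IsBaseMatrix R c) (s : Fin m → LaurentSeries F) :
    R.mulVec (R⁻¹.mulVec s) = s := by
  have hdet : IsUnit R.det :=
    (Matrix.isUnit_iff_isUnit_det R).mp (Matrix.mulVec_injective_iff_isUnit.mp hR.mulVec_injective)
  rw [Matrix.mulVec_mulVec, Matrix.mul_nonsing_inv _ hdet, Matrix.one_mulVec]

lemma Iv_neg_mulVec_add (hR : IsBaseMatrix R c) (a s : Fin m → LaurentSeries F) :
    Iv (fun i => -(R.mulVec a) i + s i) = Iv (Dmul c (R⁻¹.mulVec s - a)) := by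
  rw [← hR.Iv_mulVec, Matrix.mulVec_sub, hR.mulVec_inv_mulVec]
  congr 1
  ext1 i
  simp only [Pi.sub_apply, neg_add_eq_sub]

end IsBaseMatrix

/-- Lemma 7.5: for a base matrix `R` with `D`-component `Δ`, `A = ⌊R⁻¹s⌋`,
`α = {R⁻¹s}`, `ε ∈ F[z]^m`, `a = A - ε`, the following are equivalent:
(1) `Iv(Δα) ≤ Iv(Δε)`; (2) `α = ε = 0` or `Iv(Δα) < Iv(Δε)`;
(3) `Iv(-R·a + s) = Iv(Δα)`; (4) `Iv(-R·a + s) > v(Δ)`. -/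
theorem stmt18 (F : Type*) [Field F] (m : ℕ)
    (R : Matrix (Fin m) (Fin m) (LaurentSeries F)) (c : Fin m → ℤ)
    (hR : IsBaseMatrix R c) (s : Fin m → LaurentSeries F)
    (ε : Fin m → Polynomial F) (A α a : Fin m → LaurentSeries F)
    (hA : ∀ i, A i = polyPart (R⁻¹.mulVec s i))
    (hα : ∀ i, α i = fracPart (R⁻¹.mulVec s i))
    (ha : ∀ i, a i = A i - Zpoly (ε i)) :
    ((Iv (Dmul c α) ≤ Iv (Dmul c fun i => Zpoly (ε i))) ↔
      ((α = 0 ∧ ε = 0) ∨ Iv (Dmul c α) < Iv (Dmul c fun i => Zpoly (ε i)))) ∧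
    ((Iv (Dmul c α) ≤ Iv (Dmul c fun i => Zpoly (ε i))) ↔
      Iv (fun i => -(R.mulVec a) i + s i) = Iv (Dmul c α)) ∧
    ((Iv (Dmul c α) ≤ Iv (Dmul c fun i => Zpoly (ε i))) ↔
      gtVal (Iv (fun i => -(R.mulVec a) i + s i)) c) := by
  set e : Fin m → LaurentSeries F := fun i => Zpoly (ε i)
  have hαtop : Iv (Dmul c α) = ⊤ ↔ α = 0 := by rw [Iv_eq_top_iff, Dmul_eq_zero_iff]
  have hetop : Iv (Dmul c e) = ⊤ ↔ ε = 0 := by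
    rw [Iv_eq_top_iff, Dmul_eq_zero_iff]
    simp only [e, funext_iff, Pi.zero_apply, Zpoly_eq_zero_iff]
  have hαgt : gtVal (Iv (Dmul c α)) c :=
    gtVal_Iv_Dmul fun i hi => hα i ▸ order_fracPart_pos (hα i ▸ hi)
  have hele : Iv (Dmul c e) ≠ ⊤ → leVal (Iv (Dmul c e)) c :=
    leVal_Iv_Dmul fun i hi => order_Zpoly_nonpos (mt Zpoly_eq_zero_iff.mpr hi)
  have htop := eq_top_of_gtVal_of_leVal hαgt hele
  have hsplit : R⁻¹.mulVec s - a = α + e := by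
    ext1 i
    simp only [Pi.add_apply, Pi.sub_apply, ha, hα, hA, fracPart, e]
    ring
  rw [hR.Iv_neg_mulVec_add, hsplit, Dmul_add, Iv_add htop, min_eq_left_iff,
    gtVal_min_iff hαgt hele, le_iff_eq_or_lt]
  refine ⟨or_congr_left ⟨fun h => ?_, fun ⟨hα0, hε0⟩ => ?_⟩, Iff.rfl, Iff.rfl⟩
  · exact ⟨hαtop.mp (htop h), hetop.mp (h ▸ htop h)⟩
  · rw [hαtop.mpr hα0, hetop.mpr hε0]
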